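/- arXiv:1709.01345 — 2 statements merged into one kernel-verified Lean document; each statement's English description precedes it below -/
import Mathlib

section
/- Let N be a (right) nearring, a ∈ N right cancellable, e a left identity, and C a set of constant elements of N (elements c with c ∘ 0 = c, equivalently c ∘ x = c for all x). Let F be the subnearring generated by {a} ∪ C and G the subnearring generated by {a, e} ∪ C. Then G = { n ∈ N : n ∘ a ∈ F }. -/
/-!
Multiplying on the right by `a` maps `G` into `F`: the set of `n` with `n ∘ F ⊆ F` is a
subnearring containing `a`, `e` and the constants, so it contains `G`, and `a ∈ F`.
Conversely the image `G ∘ a` is a subnearring (as `(m ∘ a) ∘ (m' ∘ a) = (m ∘ a ∘ m') ∘ a`)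
containing `a = e ∘ a` and `c = c ∘ a`, so it contains `F`; right cancellation of `a`
then recovers `n` from `n ∘ a`.
-/

/-- `T` is a subnearring of the (right) nearring `(N, +, mul)`. -/
def IsSubNR {N : Type*} [AddGroup N] (mul : N → N → N) (T : Set N) : Prop :=
  (0 : N) ∈ T ∧ (∀ a ∈ T, ∀ b ∈ T, a + b ∈ T) ∧ (∀ a ∈ T, -a ∈ T) ∧
    (∀ a ∈ T, ∀ b ∈ T, mul a b ∈ T)

/-- The subnearring generated by `S`: the smallest subset containing `S` that is
an additive subgroup closed under `mul`. -/
def nrGen {N : Type*} [AddGroup N] (mul : N → N → N) (S : Set N) : Set N :=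
  ⋂₀ {T | S ⊆ T ∧ IsSubNR mul T}

section

variable {N : Type*} [AddGroup N] {mul : N → N → N}

lemma subset_nrGen (S : Set N) : S ⊆ nrGen mul S := fun _ hx _ hT => hT.1 hx

lemma isSubNR_nrGen (S : Set N) : IsSubNR mul (nrGen mul S) :=
  ⟨fun _ hT => hT.2.1, fun x hx y hy T hT => hT.2.2.1 x (hx T hT) y (hy T hT),
    fun x hx T hT => hT.2.2.2.1 x (hx T hT),
    fun x hx y hy T hT => hT.2.2.2.2 x (hx T hT) y (hy T hT)⟩

lemma nrGen_subset {S T : Set N} (hST : S ⊆ T) (hT : IsSubNR mul T) : nrGen mul S ⊆ T :=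
  Set.sInter_subset_of_mem ⟨hST, hT⟩

lemma zero_mul_of_rightDistrib (hdist : ∀ a b c : N, mul (a + b) c = mul a c + mul b c)
    (x : N) : mul 0 x = 0 := by
  simpa using hdist 0 0 x

lemma neg_mul_of_rightDistrib (hdist : ∀ a b c : N, mul (a + b) c = mul a c + mul b c)
    (x y : N) : mul (-x) y = -mul x y := by
  have h := hdist (-x) x y
  rw [neg_add_cancel, zero_mul_of_rightDistrib hdist] at h
  exact eq_neg_of_add_eq_zero_left h.symm

lemma isSubNR_setOf_forall_mul_mem
    (hassoc : ∀ a b c : N, mul (mul a b) c = mul a (mul b c))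
    (hdist : ∀ a b c : N, mul (a + b) c = mul a c + mul b c)
    {F : Set N} (hF : IsSubNR mul F) : IsSubNR mul {n | ∀ f ∈ F, mul n f ∈ F} := by
  obtain ⟨hzero, hadd, hneg, -⟩ := hF
  refine ⟨?_, ?_, ?_, ?_⟩
  · intro f _
    rw [zero_mul_of_rightDistrib hdist]
    exact hzero
  · intro x hx y hy f hf
    rw [hdist]
    exact hadd _ (hx f hf) _ (hy f hf)
  · intro x hx f hf
    rw [neg_mul_of_rightDistrib hdist]
    exact hneg _ (hx f hf)
  · intro x hx y hy f hf
    rw [hassoc]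
    exact hx _ (hy f hf)

lemma isSubNR_image_mul_right
    (hassoc : ∀ a b c : N, mul (mul a b) c = mul a (mul b c))
    (hdist : ∀ a b c : N, mul (a + b) c = mul a c + mul b c)
    {G : Set N} (hG : IsSubNR mul G) {a : N} (ha : a ∈ G) :
    IsSubNR mul ((fun m => mul m a) '' G) := by
  obtain ⟨hzero, hadd, hneg, hmul⟩ := hG
  refine ⟨⟨0, hzero, zero_mul_of_rightDistrib hdist a⟩, ?_, ?_, ?_⟩
  · rintro _ ⟨m, hm, rfl⟩ _ ⟨m', hm', rfl⟩
    exact ⟨m + m', hadd m hm m' hm', hdist m m' a⟩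
  · rintro _ ⟨m, hm, rfl⟩
    exact ⟨-m, hneg m hm, neg_mul_of_rightDistrib hdist m a⟩
  · rintro _ ⟨m, hm, rfl⟩ _ ⟨m', hm', rfl⟩
    refine ⟨mul m (mul a m'), hmul m hm _ (hmul a ha m' hm'), ?_⟩
    simp only [hassoc]

end

theorem gen_with_identity_and_constants {N : Type*} [AddGroup N] (mul : N → N → N)
    (hassoc : ∀ a b c : N, mul (mul a b) c = mul a (mul b c))
    (hdist : ∀ a b c : N, mul (a + b) c = mul a c + mul b c)
    (a e : N) (C : Set N)
    (hcanc : ∀ x y : N, mul x a = mul y a → x = y)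
    (hid : ∀ x : N, mul e x = x)
    (hconst : ∀ c ∈ C, ∀ x : N, mul c x = c) :
    nrGen mul ({a, e} ∪ C) = {n : N | mul n a ∈ nrGen mul ({a} ∪ C)} := by
  set F := nrGen mul ({a} ∪ C)
  set G := nrGen mul ({a, e} ∪ C)
  have hF : IsSubNR mul F := isSubNR_nrGen _
  have haF : a ∈ F := subset_nrGen _ (Or.inl rfl)
  have hG_mul_F : G ⊆ {n | ∀ f ∈ F, mul n f ∈ F} := by
    refine nrGen_subset ?_ (isSubNR_setOf_forall_mul_mem hassoc hdist hF)
    rintro x ((rfl | rfl) | hx) f hf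
    · exact hF.2.2.2 _ haF f hf
    · rwa [hid]
    · rw [hconst x hx f]
      exact subset_nrGen _ (Or.inr hx)
  have hF_image : F ⊆ (fun m => mul m a) '' G := by
    refine nrGen_subset ?_ (isSubNR_image_mul_right hassoc hdist (isSubNR_nrGen _)
      (subset_nrGen _ (Or.inl (Or.inl rfl))))
    rintro x (rfl | hx)
    · exact ⟨e, subset_nrGen _ (Or.inl (Or.inr rfl)), hid x⟩
    · exact ⟨x, subset_nrGen _ (Or.inr hx), hconst x hx a⟩
  ext n
  refine ⟨fun hn => hG_mul_F hn a haF, fun hn => ?_⟩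
  obtain ⟨m, hm, hma⟩ := hF_image hn
  rwa [← hcanc m n hma]
end

section
/- Let F be the subnearring of (ℤ[x], +, ∘) generated by {x³}. Then for every a ∈ ℕ, x^(3^a) ∈ F, and for every p ∈ F and a ∈ ℕ, the polynomials 3p·x^(2·3^a) + 3p²·x^(3^a), 6p·x^(2·3^a), and 6p²·x^(3^a) all lie in F. -/
open Polynomial

/-- Membership in the subnearring of `(ℤ[x], +, ∘)` generated by `S`:
the smallest subset of `ℤ[x]` containing `S` that is an additive subgroup
and is closed under composition of polynomials. -/
inductive NRGen (S : Set (Polynomial ℤ)) : Polynomial ℤ → Prop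
  | mem {p : Polynomial ℤ} : p ∈ S → NRGen S p
  | zero : NRGen S 0
  | add {p q : Polynomial ℤ} : NRGen S p → NRGen S q → NRGen S (p + q)
  | neg {p : Polynomial ℤ} : NRGen S p → NRGen S (-p)
  | comp {p q : Polynomial ℤ} : NRGen S p → NRGen S q → NRGen S (p.comp q)

/-! Composing with `X ^ 3` cubes a polynomial, so the cube of a sum `(p + q) ^ 3 - p ^ 3 - q ^ 3`
puts the cross terms `3 p² q + 3 p q²` into the nearring; replacing `p` by `-p` and adding or
subtracting isolates `6 p² q` and `6 p q²`. The theorem is the case `q = X ^ 3 ^ a`, itself an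
iterated cube of `X ^ 3`. -/

namespace NRGen

variable {S : Set (Polynomial ℤ)} {p q : Polynomial ℤ}

theorem sub (hp : NRGen S p) (hq : NRGen S q) : NRGen S (p - q) := by
  simpa only [sub_eq_add_neg] using hp.add hq.neg

theorem pow_of_X_pow_mem {n : ℕ} (hS : X ^ n ∈ S) (hp : NRGen S p) : NRGen S (p ^ n) := by
  simpa only [pow_comp, X_comp] using (mem hS).comp hp

theorem X_pow_pow_of_X_pow_mem {n : ℕ} (hS : X ^ n ∈ S) {a : ℕ} (ha : 1 ≤ a) :
    NRGen S (X ^ n ^ a) := by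
  induction a, ha using Nat.le_induction with
  | base => simpa only [pow_one] using mem hS
  | succ a _ ih => simpa only [pow_succ, pow_mul] using pow_of_X_pow_mem hS ih

variable (hS : X ^ 3 ∈ S) (hp : NRGen S p) (hq : NRGen S q)
include hS hp hq

theorem cross_terms_of_X_cube_mem : NRGen S (3 * p ^ 2 * q + 3 * p * q ^ 2) := by
  have h := ((pow_of_X_pow_mem hS (hp.add hq)).sub (pow_of_X_pow_mem hS hp)).sub
    (pow_of_X_pow_mem hS hq)
  convert h using 1
  ring

theorem six_mul_sq_mul_of_X_cube_mem : NRGen S (6 * p ^ 2 * q) := by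
  have h := (cross_terms_of_X_cube_mem hS hp hq).add (cross_terms_of_X_cube_mem hS hp.neg hq)
  convert h using 1
  ring

theorem six_mul_mul_sq_of_X_cube_mem : NRGen S (6 * p * q ^ 2) := by
  have h := (cross_terms_of_X_cube_mem hS hp hq).sub (cross_terms_of_X_cube_mem hS hp.neg hq)
  convert h using 1
  ring

end NRGen

theorem gen_x3_basic_elements :
    (∀ a : ℕ, 1 ≤ a → NRGen {X ^ 3} ((X : Polynomial ℤ) ^ 3 ^ a)) ∧
    ∀ p : Polynomial ℤ, NRGen {X ^ 3} p → ∀ a : ℕ, 1 ≤ a →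
      NRGen {X ^ 3} (3 * p * X ^ (2 * 3 ^ a) + 3 * p ^ 2 * X ^ 3 ^ a) ∧
      NRGen {X ^ 3} (6 * p * X ^ (2 * 3 ^ a)) ∧
      NRGen {X ^ 3} (6 * p ^ 2 * X ^ 3 ^ a) := by
  have hS : (X : Polynomial ℤ) ^ 3 ∈ ({X ^ 3} : Set (Polynomial ℤ)) := rfl
  have hX (a : ℕ) (ha : 1 ≤ a) := NRGen.X_pow_pow_of_X_pow_mem hS ha
  refine ⟨hX, fun p hp a ha => ?_⟩
  have hsq : (X : Polynomial ℤ) ^ (2 * 3 ^ a) = (X ^ 3 ^ a) ^ 2 := by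
    rw [mul_comm, pow_mul]
  rw [hsq]
  refine ⟨?_, NRGen.six_mul_mul_sq_of_X_cube_mem hS hp (hX a ha),
    NRGen.six_mul_sq_mul_of_X_cube_mem hS hp (hX a ha)⟩
  simpa only [add_comm] using NRGen.cross_terms_of_X_cube_mem hS hp (hX a ha)
end
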